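/- For any extended binary tree of height h with n leaves, let t_i denote the number of internal nodes at level i (0 ≤ i ≤ h−1); then t_i ≤ 2·t_{i−1} for 1 ≤ i ≤ h−1 and t_0 + t_1 + ⋯ + t_{h−1} = n − 1. Conversely, define the greedy sequence τ_0, …, τ_{h−1} for given n, h with h+1 ≤ n ≤ 2^h: starting from the unique tree with n = h+1 (τ_i = 1 for all i), repeatedly increment τ_k by 1 where k is the largest index with τ_k < 2τ_{k−1} (with τ_{-1} interpreted so τ_0 stays 1). Then for every valid sequence (t_i) with ∑ t_i = n − 1 and t_i ≤ 2t_{i−1}, t_0 = 1, and every 0 ≤ j ≤ h−1: τ_j + τ_{j+1} + ⋯ + τ_{h−1} ≥ t_j + t_{j+1} + ⋯ + t_{h−1}. In particular τ_{h−1} is the maximum possible number of internal nodes at level h−1, i.e., the greedy algorithm maximizes the number of leaves at level h. -/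

import Mathlib

/-- Extended binary trees: every node is a leaf or has exactly two children. -/
inductive XBT : Type
  | leaf : XBT
  | node : XBT → XBT → XBT

namespace XBT

/-- Height: length of the longest root-to-leaf path. -/
def height : XBT → ℕ
  | leaf => 0
  | node l r => 1 + max l.height r.height

/-- Number of leaves. -/
def numLeaves : XBT → ℕ
  | leaf => 1
  | node l r => l.numLeaves + r.numLeaves

/-- The number of internal nodes at level i. -/
def internAt : XBT → ℕ → ℕ
  | leaf, _ => 0
  | node _ _, 0 => 1
  | node l r, i + 1 => l.internAt i + r.internAt i

end XBT

/-- The index incremented by the greedy algorithm: the largest k with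
    τ_k < 2 τ_{k-1} (junk value 0 if there is none). -/
def greedyIdx (h : ℕ) (t : ℕ → ℕ) : ℕ :=
  WithBot.unbotD 0 (((Finset.Ico 1 h).filter fun i => t i < 2 * t (i - 1)).max)

/-- The greedy internal-node-count sequences: `greedySeq h m` is the sequence
    obtained from the all-ones sequence (the unique tree with n = h+1 leaves)
    after m greedy increments, i.e. the one for n = h + 1 + m leaves. -/
def greedySeq (h : ℕ) : ℕ → ℕ → ℕ
  | 0 => fun _ => 1
  | m + 1 =>
    Function.update (greedySeq h m) (greedyIdx h (greedySeq h m))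
      (greedySeq h m (greedyIdx h (greedySeq h m)) + 1)

/-!
Part (1) is a structural induction on the tree. For (2) we induct on the number `m` of greedy
steps. The greedy sequence `τ` is saturated (`τ (i+1) = 2 τ i`) above the level `k` it raises
next, and below `k` it exceeds by at most one the least values that can support `τ k`; both
properties survive a greedy step. Let `t` have one node more than `τ`. If `j ≤ k`, delete a node
of `t` at the topmost level holding at least two; by induction the tail sum of the smaller
sequence is at most that of `τ`, and both tail sums then grow by at most, resp. exactly, one.
If `j > k`, either `t j ≤ τ j`, and saturation gives `t i ≤ τ i` for all `i ≥ j`; or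
`t j > τ j`, which forces `t i ≥ τ i` for all `i < j`, strictly at `i = k`, so `t` has the
larger head and the smaller tail.
-/

open Finset Function

lemma sum_update_succ {ι M : Type*} [DecidableEq ι] [AddCommMonoid M] [One M] (s : Finset ι)
    (f : ι → M) (i : ι) :
    ∑ x ∈ s, update f i (f i + 1) x = ∑ x ∈ s, f x + if i ∈ s then 1 else 0 := by
  have : update f i (f i + 1) = f + Pi.single i 1 := by
    ext x
    by_cases hx : x = i
    · subst hx; simp
    · simp [hx]
  simp only [this, Pi.add_apply, sum_add_distrib, sum_pi_single']

namespace XBT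

lemma one_le_numLeaves (T : XBT) : 1 ≤ T.numLeaves := by
  induction T with
  | leaf => simp [numLeaves]
  | node l r ihl _ => simp only [numLeaves]; omega

lemma internAt_zero_le_one (T : XBT) : T.internAt 0 ≤ 1 := by
  cases T <;> simp [internAt]

lemma internAt_succ_le (T : XBT) (i : ℕ) : T.internAt (i + 1) ≤ 2 * T.internAt i := by
  induction T generalizing i with
  | leaf => simp [internAt]
  | node l r ihl ihr =>
    cases i with
    | zero =>
      have := l.internAt_zero_le_one
      have := r.internAt_zero_le_one
      simp only [internAt]
      omega
    | succ i =>
      have := ihl i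
      have := ihr i
      simp only [internAt]
      omega

lemma sum_range_internAt (T : XBT) {n : ℕ} (hn : T.height ≤ n) :
    ∑ i ∈ range n, T.internAt i = T.numLeaves - 1 := by
  induction T generalizing n with
  | leaf => simp [internAt, numLeaves]
  | node l r ihl ihr =>
    simp only [height] at hn
    obtain ⟨n, rfl⟩ : ∃ n', n = n' + 1 := ⟨n - 1, by omega⟩
    have := l.one_le_numLeaves
    have := r.one_le_numLeaves
    rw [sum_range_succ']
    simp only [internAt, sum_add_distrib, ihl (by omega : l.height ≤ n),
      ihr (by omega : r.height ≤ n), numLeaves]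
    omega

end XBT

/-- The internal-node counts `t_0, …, t_{h-1}` of a compact code of height `h`; the values at
`i ≥ h` are ignored. -/
structure IsLevelProfile (h : ℕ) (t : ℕ → ℕ) : Prop where
  zero : t 0 = 1
  succ_le : ∀ i, i + 1 < h → t (i + 1) ≤ 2 * t i
  pos : ∀ i < h, 0 < t i

namespace IsLevelProfile

variable {h : ℕ} {t : ℕ → ℕ}

lemma le_two_pow_sub_mul (ht : IsLevelProfile h t) {i j : ℕ} (hij : i ≤ j) (hj : j < h) :
    t j ≤ 2 ^ (j - i) * t i := by
  induction j, hij using Nat.le_induction with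
  | base => simp
  | succ j hij ih =>
    calc t (j + 1) ≤ 2 * t j := ht.succ_le j hj
      _ ≤ 2 * (2 ^ (j - i) * t i) := by gcongr; exact ih (by omega)
      _ = 2 ^ (j + 1 - i) * t i := by rw [Nat.sub_add_comm hij, pow_succ]; ring

lemma update {k v : ℕ} (ht : IsLevelProfile h t) (hk : k ≠ 0) (hv : 0 < v)
    (hv_le : v ≤ 2 * t (k - 1)) (hv_ge : k + 1 < h → t (k + 1) ≤ 2 * v) :
    IsLevelProfile h (update t k v) where
  zero := by rw [update_of_ne (Ne.symm hk), ht.zero]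
  succ_le i hi := by
    simp only [update_apply]
    split_ifs with h₁ h₂ h₂
    · omega
    · subst h₁; simpa using hv_le
    · subst h₂; exact hv_ge hi
    · exact ht.succ_le i hi
  pos i hi := by
    simp only [update_apply]
    split_ifs
    · exact hv
    · exact ht.pos i hi

lemma exists_eq_update_succ (ht : IsLevelProfile h t) (hsum : h < ∑ i ∈ range h, t i) :
    ∃ s ℓ, IsLevelProfile h s ∧ ℓ < h ∧ t = Function.update s ℓ (s ℓ + 1) := by
  set S := (range h).filter fun i => 2 ≤ t i
  have hS : S.Nonempty := by
    by_contra hS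
    rw [not_nonempty_iff_eq_empty, filter_eq_empty_iff] at hS
    have : ∑ i ∈ range h, t i ≤ ∑ i ∈ range h, 1 := sum_le_sum fun i hi => by
      have := hS hi
      omega
    simp only [sum_const, card_range, smul_eq_mul, mul_one] at this
    omega
  set ℓ := S.max' hS
  obtain ⟨hℓh, hℓ2⟩ : ℓ ∈ range h ∧ 2 ≤ t ℓ := mem_filter.1 (S.max'_mem hS)
  rw [mem_range] at hℓh
  have hℓ0 : ℓ ≠ 0 := by
    rintro h0
    rw [h0, ht.zero] at hℓ2
    omega
  refine ⟨Function.update t ℓ (t ℓ - 1), ℓ, ht.update hℓ0 (by omega) ?_ ?_, hℓh, ?_⟩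
  · have := ht.succ_le (ℓ - 1) (by omega)
    rw [Nat.sub_add_cancel (Nat.one_le_iff_ne_zero.2 hℓ0)] at this
    omega
  · intro hℓ1
    have : ¬ 2 ≤ t (ℓ + 1) := fun h2 => by
      have := S.le_max' (ℓ + 1) (by simp [S, hℓ1, h2])
      omega
    omega
  · rw [update_idem, update_self, Nat.sub_add_cancel (by omega), update_eq_self]

end IsLevelProfile

/-- The set whose maximum `greedyIdx` picks. -/
def unsaturatedLevels (h : ℕ) (t : ℕ → ℕ) : Finset ℕ :=
  (Ico 1 h).filter fun i => t i < 2 * t (i - 1)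

def greedyStep (h : ℕ) (t : ℕ → ℕ) : ℕ → ℕ :=
  update t (greedyIdx h t) (t (greedyIdx h t) + 1)

lemma greedySeq_succ (h m : ℕ) : greedySeq h (m + 1) = greedyStep h (greedySeq h m) := rfl

section Greedy

variable {h : ℕ} {t : ℕ → ℕ}

lemma le_greedyIdx {i : ℕ} (hi : i ∈ unsaturatedLevels h t) : i ≤ greedyIdx h t :=
  WithBot.le_unbotD (le_max hi)

lemma greedyIdx_le {b : ℕ} (H : ∀ i ∈ unsaturatedLevels h t, i ≤ b) : greedyIdx h t ≤ b :=
  (WithBot.unbotD_le_iff fun _ => b.zero_le).2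
    (Finset.max_le fun i hi => WithBot.coe_le_coe.2 (H i hi))

lemma lt_of_mem_unsaturatedLevels {i : ℕ} (hi : i ∈ unsaturatedLevels h t) : i < h :=
  (mem_Ico.1 (mem_filter.1 hi).1).2

lemma greedyIdx_le_pred : greedyIdx h t ≤ h - 1 :=
  greedyIdx_le fun _ hi => Nat.le_sub_one_of_lt (lt_of_mem_unsaturatedLevels hi)

lemma greedyIdx_mem_of_nonempty (hne : (unsaturatedLevels h t).Nonempty) :
    greedyIdx h t ∈ unsaturatedLevels h t := by
  have : greedyIdx h t = (unsaturatedLevels h t).max' hne := by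
    change WithBot.unbotD 0 (unsaturatedLevels h t).max = _
    rw [← coe_max' hne]
    rfl
  exact this ▸ max'_mem _ hne

lemma greedyIdx_greedyStep_le : greedyIdx h (greedyStep h t) ≤ greedyIdx h t + 1 := by
  refine greedyIdx_le fun u hu => ?_
  by_contra! hlt
  have hu' : u ∈ unsaturatedLevels h t := by
    have hne : ∀ i ≠ greedyIdx h t, greedyStep h t i = t i := fun i hi => update_of_ne hi _ _
    simp only [unsaturatedLevels, mem_filter, mem_Ico] at hu ⊢
    rwa [hne u (by omega), hne (u - 1) (by omega)] at hu
  have := le_greedyIdx hu'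
  omega

lemma sum_greedyStep (s : Finset ℕ) :
    ∑ i ∈ s, greedyStep h t i = ∑ i ∈ s, t i + if greedyIdx h t ∈ s then 1 else 0 :=
  sum_update_succ s t _

namespace IsLevelProfile

lemma greedyStep (ht : IsLevelProfile h t) (hk : greedyIdx h t ∈ unsaturatedLevels h t) :
    IsLevelProfile h (greedyStep h t) := by
  simp only [unsaturatedLevels, mem_filter, mem_Ico] at hk
  refine ht.update (by omega) (by omega) (by omega) fun hk₁ => ?_
  have := ht.succ_le _ hk₁
  omega

lemma eq_two_pow_sub_mul_greedyIdx (ht : IsLevelProfile h t) {j : ℕ} (hkj : greedyIdx h t ≤ j)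
    (hj : j < h) : t j = 2 ^ (j - greedyIdx h t) * t (greedyIdx h t) := by
  induction j, hkj using Nat.le_induction with
  | base => simp
  | succ j hkj ih =>
    have hsat : ¬ t (j + 1) < 2 * t j := fun hlt => by
      have := le_greedyIdx (h := h) (t := t) (i := j + 1)
        (by simp only [unsaturatedLevels, mem_filter, mem_Ico]; simpa [hj] using hlt)
      omega
    rw [Nat.sub_add_comm hkj, pow_succ, mul_comm _ 2, mul_assoc, ← ih (by omega)]
    have := ht.succ_le j hj
    omega

lemma greedyIdx_mem (ht : IsLevelProfile h t) (hsum : ∑ i ∈ range h, t i + 1 < 2 ^ h) :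
    greedyIdx h t ∈ unsaturatedLevels h t := by
  rcases (unsaturatedLevels h t).eq_empty_or_nonempty with hS | hS
  · have hk : greedyIdx h t = 0 := Nat.le_zero.1 (greedyIdx_le (by simp [hS]))
    have : ∑ i ∈ range h, t i = ∑ i ∈ range h, 2 ^ i := sum_congr rfl fun i hi => by
      simpa [hk, ht.zero] using ht.eq_two_pow_sub_mul_greedyIdx (j := i) (by omega) (mem_range.1 hi)
    rw [this, Nat.geomSum_eq le_rfl] at hsum
    have := Nat.one_le_two_pow (n := h)
    omega
  · exact greedyIdx_mem_of_nonempty hS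

end IsLevelProfile

end Greedy

/-- `t i ≤ ⌊t k / 2^(k-i)⌋ + 1` for `i < k`: below level `k`, `t` exceeds by at most one the
least values from which level `k` can grow to `t k`. -/
def IsTightBelow (t : ℕ → ℕ) (k : ℕ) : Prop :=
  ∀ i < k, 2 ^ (k - i) * (t i - 1) ≤ t k

lemma two_pow_sub_mul_two_pow_sub {i j k : ℕ} (hij : i ≤ j) (hjk : j ≤ k) :
    2 ^ (k - j) * 2 ^ (j - i) = 2 ^ (k - i) := by
  rw [← pow_add]
  congr 1
  omega

lemma isTightBelow_greedyStep {h : ℕ} {τ : ℕ → ℕ} (hτ : IsLevelProfile h τ)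
    (hk : greedyIdx h τ ∈ unsaturatedLevels h τ) (hτk : IsTightBelow τ (greedyIdx h τ)) :
    IsTightBelow (greedyStep h τ) (greedyIdx h (greedyStep h τ)) := by
  have hsat := fun j => hτ.eq_two_pow_sub_mul_greedyIdx (j := j)
  have hsat' := fun j => (hτ.greedyStep hk).eq_two_pow_sub_mul_greedyIdx (j := j)
  have hk'_le := greedyIdx_greedyStep_le (h := h) (t := τ)
  have hk'_le_pred := greedyIdx_le_pred (h := h) (t := greedyStep h τ)
  have hkh := lt_of_mem_unsaturatedLevels hk
  have hne : ∀ i ≠ greedyIdx h τ, greedyStep h τ i = τ i := fun i hi => update_of_ne hi _ _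
  have hk_eq : greedyStep h τ (greedyIdx h τ) = τ (greedyIdx h τ) + 1 := update_self _ _ _
  generalize greedyIdx h τ = k at *
  generalize greedyIdx h (greedyStep h τ) = k' at *
  generalize greedyStep h τ = τ' at *
  rcases (by omega : k' < k ∨ k' = k ∨ k' = k + 1) with hk' | rfl | rfl
  · -- the increment completed the saturation of the levels `k'+1, …, k`
    have hk_sat := hsat' k hk'.le hkh
    rw [hk_eq, hne k' hk'.ne] at hk_sat
    intro i hi
    rw [hne i (by omega), hne k' hk'.ne]
    refine Nat.le_of_lt (Nat.lt_of_mul_lt_mul_left (a := 2 ^ (k - k')) ?_)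
    calc 2 ^ (k - k') * (2 ^ (k' - i) * (τ i - 1)) = 2 ^ (k - i) * (τ i - 1) := by
          rw [← mul_assoc, two_pow_sub_mul_two_pow_sub hi.le hk'.le]
      _ ≤ τ k := hτk i (by omega)
      _ < 2 ^ (k - k') * τ k' := by omega
  · intro i hi
    rw [hne i hi.ne, hk_eq]
    exact (hτk i hi).trans (Nat.le_succ _)
  · have hk_succ : τ' (k + 1) = 2 * τ k := by
      rw [hne (k + 1) (by omega), hsat (k + 1) (by omega) (by omega)]
      simp
    intro i hi
    rw [hk_succ]
    rcases (by omega : i < k ∨ i = k) with hi | rfl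
    · rw [hne i hi.ne, Nat.sub_add_comm hi.le, pow_succ, mul_comm _ 2, mul_assoc]
      exact Nat.mul_le_mul_left 2 (hτk i hi)
    · simp [hk_eq]

lemma greedySeq_spec {h m : ℕ} (hm : h + m < 2 ^ h) :
    IsLevelProfile h (greedySeq h m) ∧ ∑ i ∈ range h, greedySeq h m i = h + m ∧
      IsTightBelow (greedySeq h m) (greedyIdx h (greedySeq h m)) := by
  induction m with
  | zero => exact ⟨⟨rfl, by simp [greedySeq], by simp [greedySeq]⟩, by simp [greedySeq],
      fun i _ => by simp [greedySeq]⟩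
  | succ m ih =>
    obtain ⟨hτ, hsum, htight⟩ := ih (by omega)
    have hk := hτ.greedyIdx_mem (by omega)
    rw [greedySeq_succ, sum_greedyStep, if_pos (mem_range.2 (lt_of_mem_unsaturatedLevels hk)), hsum]
    exact ⟨hτ.greedyStep hk, by omega, isTightBelow_greedyStep hτ hk htight⟩

lemma sum_Ico_le_of_isTightBelow {h k j : ℕ} {τ t : ℕ → ℕ}
    (hsat : ∀ i, k ≤ i → i < h → τ i = 2 ^ (i - k) * τ k) (hτk : IsTightBelow τ k)
    (ht : IsLevelProfile h t) (hsum : ∑ i ∈ range h, t i = ∑ i ∈ range h, τ i + 1)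
    (hkj : k < j) (hjh : j < h) :
    ∑ i ∈ Ico j h, t i ≤ ∑ i ∈ Ico j h, τ i := by
  have hsat' : ∀ a b, k ≤ a → a ≤ b → b < h → τ b = 2 ^ (b - a) * τ a :=
    fun a b hka hab hb => by
      rw [hsat b (by omega) hb, hsat a hka (by omega), ← mul_assoc,
        two_pow_sub_mul_two_pow_sub hka hab]
  by_cases hle : t j ≤ τ j
  · refine sum_le_sum fun i hi => ?_
    rw [mem_Ico] at hi
    calc t i ≤ 2 ^ (i - j) * t j := ht.le_two_pow_sub_mul hi.1 hi.2
      _ ≤ 2 ^ (i - j) * τ j := by gcongr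
      _ = τ i := (hsat' j i hkj.le hi.1 hi.2).symm
  · push Not at hle
    have hupper : ∀ i, k ≤ i → i < j → τ i < t i := fun i hki hij =>
      Nat.lt_of_mul_lt_mul_left (a := 2 ^ (j - i)) <| calc
        2 ^ (j - i) * τ i = τ j := (hsat' i j hki hij.le hjh).symm
        _ < t j := hle
        _ ≤ 2 ^ (j - i) * t i := ht.le_two_pow_sub_mul hij.le hjh
    have hlower : ∀ i < k, τ i ≤ t i := fun i hik => by
      suffices τ i - 1 < t i by omega
      refine Nat.lt_of_mul_lt_mul_left (a := 2 ^ (j - i)) ?_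
      calc 2 ^ (j - i) * (τ i - 1) = 2 ^ (j - k) * (2 ^ (k - i) * (τ i - 1)) := by
            rw [← mul_assoc, two_pow_sub_mul_two_pow_sub hik.le hkj.le]
        _ ≤ 2 ^ (j - k) * τ k := Nat.mul_le_mul_left _ (hτk i hik)
        _ = τ j := (hsat' k j le_rfl hkj.le hjh).symm
        _ < t j := hle
        _ ≤ 2 ^ (j - i) * t i := ht.le_two_pow_sub_mul (by omega) hjh
    have hhead : ∑ i ∈ range j, τ i < ∑ i ∈ range j, t i :=
      sum_lt_sum (fun i hi => if hik : i < k then hlower i hik else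
          (hupper i (by omega) (mem_range.1 hi)).le)
        ⟨k, mem_range.2 hkj, hupper k le_rfl hkj⟩
    rw [← sum_range_add_sum_Ico _ hjh.le, ← sum_range_add_sum_Ico _ hjh.le] at hsum
    omega

theorem sum_Ico_le_greedySeq {h m : ℕ} (hm : h + m < 2 ^ h) {t : ℕ → ℕ}
    (ht : IsLevelProfile h t) (hsum : ∑ i ∈ range h, t i = h + m) (j : ℕ) :
    ∑ i ∈ Ico j h, t i ≤ ∑ i ∈ Ico j h, greedySeq h m i := by
  induction m generalizing t with
  | zero =>
    rcases lt_or_ge j h with hjh | hjh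
    · have hhead : j ≤ ∑ i ∈ range j, t i := by
        simpa using
          card_nsmul_le_sum (range j) t 1 fun i hi => ht.pos i ((mem_range.1 hi).trans hjh)
      rw [← sum_range_add_sum_Ico _ hjh.le] at hsum
      simp only [greedySeq, sum_const, Nat.card_Ico, smul_eq_mul, mul_one]
      omega
    · simp [Ico_eq_empty_of_le hjh]
  | succ m ih =>
    obtain ⟨hτ, hτsum, hτk⟩ := greedySeq_spec (h := h) (m := m) (by omega)
    have hk := hτ.greedyIdx_mem (by omega)
    have hkh := lt_of_mem_unsaturatedLevels hk
    rw [greedySeq_succ, sum_greedyStep]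
    by_cases hjk : j ≤ greedyIdx h (greedySeq h m)
    · obtain ⟨s, ℓ, hs, hℓ, rfl⟩ := ht.exists_eq_update_succ (by omega)
      rw [sum_update_succ, if_pos (mem_range.2 hℓ)] at hsum
      have hIH := ih (by omega) hs (by omega)
      rw [sum_update_succ, if_pos (mem_Ico.2 ⟨hjk, hkh⟩)]
      split_ifs at * <;> omega
    · rcases lt_or_ge j h with hjh | hjh
      · exact (sum_Ico_le_of_isTightBelow (fun i => hτ.eq_two_pow_sub_mul_greedyIdx) hτk ht
          (by omega) (by omega) hjh).trans (Nat.le_add_right _ _)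
      · simp [Ico_eq_empty_of_le hjh]

/-- (1) For any extended binary tree of height h (≥ 1) with n leaves, the level
    counts t_i of internal nodes satisfy t_i ≤ 2 t_{i-1} for 1 ≤ i ≤ h-1 and
    t_0 + ⋯ + t_{h-1} = n - 1.  (2) Conversely, for h+1 ≤ n ≤ 2^h and any valid
    sequence (t_i) (t_0 = 1, positive, t_i ≤ 2 t_{i-1}, summing to n - 1), the
    greedy sequence τ for n, h dominates all its tail sums:
    t_j + ⋯ + t_{h-1} ≤ τ_j + ⋯ + τ_{h-1} for every 0 ≤ j ≤ h-1; in particular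
    (j = h-1) the greedy algorithm maximizes the number of internal nodes at
    level h-1, i.e. the number of leaves at level h. -/
theorem greedy_code_optimal (h : ℕ) (hh : 1 ≤ h) :
    (∀ T : XBT, T.height = h →
      (∀ i, 1 ≤ i → i ≤ h - 1 → T.internAt i ≤ 2 * T.internAt (i - 1)) ∧
        ∑ i ∈ Finset.range h, T.internAt i = T.numLeaves - 1) ∧
    (∀ n, h + 1 ≤ n → n ≤ 2 ^ h → ∀ t : ℕ → ℕ, t 0 = 1 →
      (∀ i, 1 ≤ i → i ≤ h - 1 → t i ≤ 2 * t (i - 1)) →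
      (∀ i, i < h → 1 ≤ t i) →
      (∑ i ∈ Finset.range h, t i = n - 1) →
      ∀ j, j ≤ h - 1 →
        ∑ i ∈ Finset.Icc j (h - 1), t i
          ≤ ∑ i ∈ Finset.Icc j (h - 1), greedySeq h (n - (h + 1)) i) := by
  refine ⟨fun T hT => ⟨fun i hi _ => ?_, hT ▸ T.sum_range_internAt le_rfl⟩, ?_⟩
  · simpa [Nat.sub_add_cancel hi] using T.internAt_succ_le (i - 1)
  · intro n hn₁ hn₂ t ht₀ ht_le ht_pos hsum j _
    have ht : IsLevelProfile h t :=
      ⟨ht₀, fun i hi => by simpa using ht_le (i + 1) (by omega) (by omega), ht_pos⟩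
    rw [← Ico_add_one_right_eq_Icc, Nat.sub_add_cancel hh]
    exact sum_Ico_le_greedySeq (by omega) ht (by omega) j
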